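/- arXiv:1909.06052 — 3 statements merged into one kernel-verified Lean document; each statement's English description precedes it below -/
import Mathlib

section
/- Let A be a commutative Banach algebra, X* a Banach A-module which is the dual of a Banach space, and suppose m is a topological invariant mean on the A-submodule WAP of weakly almost periodic elements, meaning ⟨u·T, m⟩ = u(e)·⟨T, m⟩ for a fixed character u ↦ u(e). Then under the hypotheses of the paper (existence of a norm-one net u_α in the unit ball of A with u_α → m weak* and u_α(e) → 1), for every T ∈ WAP one has a subnet u_{α_β} with u_{α_β}·T → ⟨T, m⟩·I in the weak topology of X*, where I is the functional corresponding to the character. Consequently any two topological invariant means on WAP coincide: the topological invariant mean on WAP, if it exists, is unique. -/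
open Metric Filter Topology

/-- A map between normed spaces is a weakly compact operator if it sends the closed
unit ball to a relatively weakly compact set. -/
def IsWeaklyCompactOperator {E F : Type*} [NormedAddCommGroup E] [NormedSpace ℂ E]
    [NormedAddCommGroup F] [NormedSpace ℂ F] (f : E → F) : Prop :=
  IsCompact (closure ((toWeakSpace ℂ F) '' (f '' closedBall (0 : E) 1)))

variable {A : Type*} [NormedCommRing A] [NormedAlgebra ℂ A]

/-- The module action of `A` on its dual: `⟨v, u·T⟩ = ⟨uv, T⟩`. -/
noncomputable def dualAct (u : A) (T : A →L[ℂ] ℂ) : A →L[ℂ] ℂ :=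
  T.comp (ContinuousLinearMap.mul ℂ A u)

/-- The weakly almost periodic functionals on `A`. -/
noncomputable def WAP (A : Type*) [NormedCommRing A] [NormedAlgebra ℂ A] :
    Set (A →L[ℂ] ℂ) :=
  {T | IsWeaklyCompactOperator (fun u : A => dualAct u T)}

lemma mapClusterPt_eq_of_tendsto {α X : Type*} [TopologicalSpace X] [T2Space X]
    {F : Filter α} {u : α → X} {x y : X} (h : MapClusterPt x F u)
    (h' : Tendsto u F (𝓝 y)) : x = y := by
  refine eq_of_nhds_neBot (NeBot.mono h.clusterPt ?_)
  exact inf_le_inf_left _ h'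

lemma weak_eval_continuous {F : Type*} [NormedAddCommGroup F] [NormedSpace ℂ F]
    (φ : F →L[ℂ] ℂ) : Continuous fun x : WeakSpace ℂ F => φ ((toWeakSpace ℂ F).symm x) :=
  WeakBilin.eval_continuous (topDualPairing ℂ F).flip φ

set_option maxHeartbeats 1000000 in
/-- Uniqueness of the topological invariant mean on the weakly almost periodic
functionals: if `m` is a topological invariant mean which is a weak* limit of a net
from the unit ball of `A`, then any topological invariant mean `m'` coincides with
`m` on `WAP`. -/
theorem invariant_mean_unique_on_WAP (I : A →L[ℂ] ℂ)
    (hI : ∀ u v : A, I (u * v) = I u * I v)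
    (m m' : (A →L[ℂ] ℂ) →L[ℂ] ℂ)
    (hmI : m I = 1) (hm'I : m' I = 1) (hmn : ‖m‖ = 1) (hm'n : ‖m'‖ = 1)
    (hminv : ∀ (u : A), ∀ T ∈ WAP A, m (dualAct u T) = I u * m T)
    (hm'inv : ∀ (u : A), ∀ T ∈ WAP A, m' (dualAct u T) = I u * m' T)
    {ι : Type*} (l : Filter ι) [l.NeBot] (u : ι → A)
    (hub : ∀ i, ‖u i‖ ≤ 1)
    (hwstar : ∀ T : A →L[ℂ] ℂ, Tendsto (fun i => T (u i)) l (𝓝 (m T))) :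
    ∀ T ∈ WAP A, m T = m' T := by
  intro T hT
  have hK : IsCompact (closure ((toWeakSpace ℂ (A →L[ℂ] ℂ)) ''
      ((fun u : A => dualAct u T) '' closedBall (0 : A) 1))) := hT
  set f : ι → WeakSpace ℂ (A →L[ℂ] ℂ) :=
    fun i => toWeakSpace ℂ (A →L[ℂ] ℂ) (dualAct (u i) T) with hf
  have hmem : ∀ i, f i ∈ closure ((toWeakSpace ℂ (A →L[ℂ] ℂ)) ''
      ((fun u : A => dualAct u T) '' closedBall (0 : A) 1)) := by
    intro i
    exact subset_closure ⟨dualAct (u i) T,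
      ⟨u i, by simpa [mem_closedBall_zero_iff] using hub i, rfl⟩, rfl⟩
  have hle : map f l ≤ 𝓟 (closure ((toWeakSpace ℂ (A →L[ℂ] ℂ)) ''
      ((fun u : A => dualAct u T) '' closedBall (0 : A) 1))) := by
    exact le_principal_iff.2 (Filter.mem_map.2 (Filter.Eventually.of_forall hmem))
  obtain ⟨x, -, hx⟩ := hK.exists_clusterPt hle
  have hx' : MapClusterPt x l f := hx
  set y : A →L[ℂ] ℂ := (toWeakSpace ℂ (A →L[ℂ] ℂ)).symm x with hy
  -- identify y : for each v, y v = m T * I v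
  have hyv : ∀ v : A, y v = m T * I v := by
    intro v
    have hc : Continuous fun z : WeakSpace ℂ (A →L[ℂ] ℂ) =>
        ((toWeakSpace ℂ (A →L[ℂ] ℂ)).symm z) v :=
      weak_eval_continuous (ContinuousLinearMap.apply ℂ ℂ v)
    have hcl : MapClusterPt (y v) l
        (fun i => ((toWeakSpace ℂ (A →L[ℂ] ℂ)).symm (f i)) v) :=
      hx'.continuousAt_comp hc.continuousAt
    have hten : Tendsto (fun i => ((toWeakSpace ℂ (A →L[ℂ] ℂ)).symm (f i)) v) l
        (𝓝 (m T * I v)) := by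
      have h1 : ∀ i, ((toWeakSpace ℂ (A →L[ℂ] ℂ)).symm (f i)) v
          = (dualAct v T) (u i) := by
        intro i
        simp only [hf, LinearEquiv.symm_apply_apply]
        show T (u i * v) = T (v * u i)
        rw [mul_comm]
      simp only [h1]
      have := hwstar (dualAct v T)
      rwa [hminv v T hT, mul_comm] at this
    exact mapClusterPt_eq_of_tendsto hcl hten
  have hyI : y = m T • I := by
    ext v
    simp [hyv v]
  -- apply m'
  have hcm' : Continuous fun z : WeakSpace ℂ (A →L[ℂ] ℂ) =>
      m' ((toWeakSpace ℂ (A →L[ℂ] ℂ)).symm z) := weak_eval_continuous m'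
  have hclm' : MapClusterPt (m' y) l
      (fun i => m' ((toWeakSpace ℂ (A →L[ℂ] ℂ)).symm (f i))) :=
    by
      have := hx'.continuousAt_comp (f := fun z : WeakSpace ℂ (A →L[ℂ] ℂ) => m' ((toWeakSpace ℂ (A →L[ℂ] ℂ)).symm z)) hcm'.continuousAt
      exact this
  have htenm' : Tendsto (fun i => m' ((toWeakSpace ℂ (A →L[ℂ] ℂ)).symm (f i))) l
      (𝓝 (m' T)) := by
    have h1 : ∀ i, m' ((toWeakSpace ℂ (A →L[ℂ] ℂ)).symm (f i)) = I (u i) * m' T := by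
      intro i
      simp only [hf, LinearEquiv.symm_apply_apply]
      exact hm'inv (u i) T hT
    simp only [h1]
    have := (hwstar I).mul_const (m' T)
    rwa [hmI, one_mul] at this
  have : m' y = m' T := mapClusterPt_eq_of_tendsto hclm' htenm'
  rw [hyI] at this
  simp only [map_smul, smul_eq_mul, hm'I, mul_one] at this
  exact this
end

section
/- Let G be a locally compact group, μ a probability (Radon) measure on G, and A a Banach algebra of bounded continuous functions on G with ‖·‖_∞ ≤ C‖·‖_A, regarded inside A' via ⟨u, μ⟩ = ∫ u dμ. Suppose the map S : L²(G, μ) → A' defined by ⟨v, S f⟩ = ∫_G v f dμ is bounded. Then the map u ↦ u·μ from A to A' (where u·μ is the functional v ↦ ∫ uv dμ) is a weakly compact operator, i.e., μ is a weakly almost periodic functional on A. -/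
/-!
`u ↦ u·μ` factors as `S ∘ T`, where `T : A → L²(μ)` is the inclusion, bounded because `μ` is
finite and `‖·‖_∞ ≤ C ‖·‖_A`. So the unit ball of `A` lands in the image under `S` of a closed
ball of the Hilbert space `L²(μ)`. That ball is weakly compact (the Riesz representation carries
the weak-* compact ball of the dual given by Banach–Alaoglu onto it), and `S` is weak-to-weak
continuous.
-/

open Metric Filter MeasureTheory

open scoped ENNReal

section Hilbert

variable {𝕜 H : Type*} [RCLike 𝕜] [NormedAddCommGroup H] [InnerProductSpace 𝕜 H] [CompleteSpace H]

open InnerProductSpace ComplexConjugate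

theorem continuous_toWeakSpace_toDual_symm :
    Continuous fun x' : WeakDual 𝕜 H ↦
      toWeakSpace 𝕜 H ((toDual 𝕜 H).symm (WeakDual.toStrongDual x')) := by
  refine WeakBilin.continuous_of_continuous_eval _ fun ℓ ↦ ?_
  have riesz (x' : WeakDual 𝕜 H) : ℓ ((toDual 𝕜 H).symm (WeakDual.toStrongDual x')) =
      conj (WeakDual.toStrongDual x' ((toDual 𝕜 H).symm ℓ)) := by
    rw [← toDual_symm_apply, ← toDual_symm_apply, inner_conj_symm]
  exact (RCLike.continuous_conj.comp (WeakDual.eval_continuous _)).congr fun x' ↦ (riesz x').symm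

theorem isCompact_toWeakSpace_closedBall (x : H) (r : ℝ) :
    IsCompact (toWeakSpace 𝕜 H '' closedBall x r) := by
  have hball : (toDual 𝕜 H).symm '' closedBall (toDual 𝕜 H x) r = closedBall x r := by
    rw [(toDual 𝕜 H).symm.image_closedBall, LinearIsometryEquiv.symm_apply_apply]
  have himage : (fun x' : WeakDual 𝕜 H ↦
      toWeakSpace 𝕜 H ((toDual 𝕜 H).symm (WeakDual.toStrongDual x'))) ''
        (WeakDual.toStrongDual ⁻¹' closedBall (toDual 𝕜 H x) r) =
      toWeakSpace 𝕜 H '' closedBall x r := by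
    rw [← hball, Set.image_image,
      ← Set.image_image (fun y ↦ toWeakSpace 𝕜 H ((toDual 𝕜 H).symm y)),
      WeakDual.toStrongDual.surjective.image_preimage]
  exact himage ▸ (WeakDual.isCompact_closedBall _ r).image continuous_toWeakSpace_toDual_symm

end Hilbert

theorem ContinuousLinearMap.isWeaklyCompactOperator_comp {E F H : Type*}
    [NormedAddCommGroup E] [NormedSpace ℂ E] [NormedAddCommGroup F] [NormedSpace ℂ F]
    [NormedAddCommGroup H] [InnerProductSpace ℂ H] [CompleteSpace H]
    (S : H →L[ℂ] F) (T : E →L[ℂ] H) : IsWeaklyCompactOperator (S.comp T) := by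
  have hK : IsCompact (WeakSpace.map S '' (toWeakSpace ℂ H '' closedBall 0 ‖T‖)) :=
    (isCompact_toWeakSpace_closedBall 0 _).image (WeakSpace.map S).continuous
  refine hK.of_isClosed_subset isClosed_closure (closure_minimal ?_ hK.isClosed)
  rintro _ ⟨_, ⟨u, hu, rfl⟩, rfl⟩
  refine ⟨toWeakSpace ℂ H (T u), ⟨T u, ?_, rfl⟩, rfl⟩
  rw [mem_closedBall_zero_iff] at hu ⊢
  exact (T.le_opNorm u).trans (mul_le_of_le_one_right (norm_nonneg T) hu)

section ToLp

variable {α 𝕜 E F : Type*} [MeasurableSpace α] {μ : Measure α} [IsFiniteMeasure μ]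
  [NormedField 𝕜] [NormedAddCommGroup E] [NormedSpace 𝕜 E] [NormedAddCommGroup F] [NormedSpace 𝕜 F]
  (j : E →ₗ[𝕜] (α → F)) (hmeas : ∀ u, AEStronglyMeasurable (j u) μ) {C : ℝ}
  (hbdd : ∀ u x, ‖j u x‖ ≤ C * ‖u‖)

include hmeas hbdd in
theorem LinearMap.memLp_of_bound {p : ℝ≥0∞} (u : E) : MemLp (j u) p μ :=
  .of_bound (hmeas u) _ (ae_of_all _ (hbdd u))

variable (p : ℝ≥0∞) [Fact (1 ≤ p)]

noncomputable def LinearMap.toLpOfBound : E →L[𝕜] Lp F p μ :=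
  LinearMap.mkContinuousOfExistsBound
    { toFun u := (j.memLp_of_bound hmeas hbdd u).toLp (j u)
      map_add' u v := by
        rw [← MemLp.toLp_add]
        exact MemLp.toLp_congr _ _ (by rw [map_add])
      map_smul' c u := by
        rw [RingHom.id_apply, ← MemLp.toLp_const_smul]
        exact MemLp.toLp_congr _ _ (by rw [map_smul]) }
    ⟨measureUnivNNReal μ ^ p.toReal⁻¹ * max C 0, fun u ↦ by
      rw [mul_assoc]
      refine Lp.norm_le_of_ae_bound (by positivity) ?_
      filter_upwards [(j.memLp_of_bound hmeas hbdd u).coeFn_toLp] with x hx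
      rw [LinearMap.coe_mk, AddHom.coe_mk, hx]
      exact (hbdd u x).trans (mul_le_mul_of_nonneg_right (le_max_left C 0) (norm_nonneg u))⟩

theorem LinearMap.toLpOfBound_ae_eq (u : E) : j.toLpOfBound hmeas hbdd p u =ᵐ[μ] j u :=
  (j.memLp_of_bound hmeas hbdd u).coeFn_toLp

end ToLp

theorem probability_measure_weakly_almost_periodic_general
    {G : Type*} [TopologicalSpace G] [MeasurableSpace G] [BorelSpace G]
    (μ : Measure G) [IsProbabilityMeasure μ]
    {A : Type*} [NormedCommRing A] [NormedAlgebra ℂ A]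
    (j : A →ₗ[ℂ] (G → ℂ))
    (hjcont : ∀ u : A, Continuous (j u))
    (C : ℝ) (hjbdd : ∀ (u : A) (x : G), ‖j u x‖ ≤ C * ‖u‖)
    (S : (Lp ℂ 2 μ) →L[ℂ] (A →L[ℂ] ℂ))
    (hS : ∀ (f : Lp ℂ 2 μ) (v : A), S f v = ∫ x, j v x * f x ∂μ)
    (M : A → (A →L[ℂ] ℂ))
    (hM : ∀ u v : A, M u v = ∫ x, j u x * j v x ∂μ) :
    IsWeaklyCompactOperator M := by
  set T := j.toLpOfBound (fun u ↦ (hjcont u).aestronglyMeasurable) hjbdd 2 (μ := μ)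
  have hfactor : M = S.comp T := by
    ext u v
    rw [hM, ContinuousLinearMap.comp_apply, hS]
    refine integral_congr_ae ?_
    filter_upwards [j.toLpOfBound_ae_eq _ hjbdd 2 u] with x hx
    rw [hx, mul_comm]
  exact hfactor ▸ S.isWeaklyCompactOperator_comp T

/-- A probability measure on a locally compact group defines a weakly almost
periodic functional on a Banach algebra `A` of bounded continuous functions:
the map `u ↦ u·μ` from `A` to `A'` is weakly compact, since it factors through
the reflexive space `L²(μ)`. -/
theorem probability_measure_weakly_almost_periodic
    {G : Type*} [TopologicalSpace G] [Group G] [IsTopologicalGroup G]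
    [LocallyCompactSpace G] [MeasurableSpace G] [BorelSpace G]
    (μ : Measure G) [IsProbabilityMeasure μ]
    {A : Type*} [NormedCommRing A] [NormedAlgebra ℂ A]
    (j : A →ₗ[ℂ] (G → ℂ))
    (hjmul : ∀ u v : A, j (u * v) = j u * j v)
    (hjcont : ∀ u : A, Continuous (j u))
    (C : ℝ) (hjbdd : ∀ (u : A) (x : G), ‖j u x‖ ≤ C * ‖u‖)
    (S : (Lp ℂ 2 μ) →L[ℂ] (A →L[ℂ] ℂ))
    (hS : ∀ (f : Lp ℂ 2 μ) (v : A), S f v = ∫ x, j v x * f x ∂μ)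
    (M : A → (A →L[ℂ] ℂ))
    (hM : ∀ u v : A, M u v = ∫ x, j u x * j v x ∂μ) :
    IsWeaklyCompactOperator M :=
  probability_measure_weakly_almost_periodic_general μ j hjcont C hjbdd S hS M hM
end

section
/- Let A be a commutative Banach algebra with a bounded approximate identity. Then the norm closure of the set { u·T : u ∈ A, T ∈ A' } (a subset of the dual A' with the action ⟨v, u·T⟩ = ⟨uv, T⟩) equals the set { u·T : u ∈ A, T ∈ A' } itself, i.e., the module product A·A' is norm-closed. (This is an instance of Cohen's factorization theorem for the essential part of the dual module.) -/
/-!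
Hewitt's proof of Cohen's factorization theorem. Let `π` be the representation of `A` on
`X = A'`, `(eᵢ)` the approximate identity, bounded by `C`, and `t > 0` so small that every
`1 - t (1 - π eᵢ)` is invertible with inverse of norm at most `2`. Starting from `U₀ = 1`,
multiply by such operators `1 - t (1 - π aₙ)`, `aₙ = eᵢ` for a suitable `i`; then
`Uₙ = (1 - t)ⁿ + π bₙ` with `bₙ ∈ A`. If `x` lies in the closure of `A·A'`, then `π eᵢ x → x`
(this holds on `A·A'` and passes to the closure because the `π eᵢ` are uniformly bounded),
so `aₙ` can be chosen with `aₙ bₙ` close to `bₙ` and `π aₙ x` close to `x`. Then `bₙ` and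
`zₙ = Uₙ⁻¹ x` converge geometrically, to `b` and `z`, and `x = (1 - t)ⁿ zₙ + π bₙ zₙ` tends
to `π b z`.
-/

open Metric Filter Topology

variable {A : Type*} [NormedCommRing A] [NormedAlgebra ℂ A] [CompleteSpace A]

theorem exists_seq_of_forall_exists_succ {α : Type*} (P : ℕ → α → Prop) (R : ℕ → α → α → Prop)
    {a₀ : α} (h₀ : P 0 a₀) (h : ∀ n a, P n a → ∃ a', P (n + 1) a' ∧ R n a a') :
    ∃ f : ℕ → α, (∀ n, P n (f n)) ∧ ∀ n, R n (f n) (f (n + 1)) := by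
  choose g hgP hgR using h
  let f : ∀ n, {a // P n a} := fun n => Nat.rec ⟨a₀, h₀⟩ (fun n a => ⟨g n a a.2, hgP n a a.2⟩) n
  exact ⟨fun n => (f n).1, fun n => (f n).2, fun n => hgR n _ (f n).2⟩

theorem exists_units_val_eq_one_sub {R : Type*} [NormedRing R] [CompleteSpace R]
    (h1 : ‖(1 : R)‖ ≤ 1) {s : R} (hs : ‖s‖ ≤ 2⁻¹) :
    ∃ u : Rˣ, (u : R) = 1 - s ∧ ‖(↑u⁻¹ : R)‖ ≤ 2 := by
  have hs1 : ‖s‖ < 1 := hs.trans_lt (by norm_num)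
  refine ⟨Units.oneSub s hs1, rfl, (tsum_geometric_le_of_norm_lt_one s hs1).trans ?_⟩
  have : (1 - ‖s‖)⁻¹ ≤ 2 := by
    rw [inv_le_comm₀ (by linarith) two_pos]; linarith
  linarith

theorem ContinuousLinearMap.isClosed_setOf_tendsto_apply_self {𝕜 X ι : Type*}
    [NontriviallyNormedField 𝕜] [NormedAddCommGroup X] [NormedSpace 𝕜 X] {l : Filter ι}
    {P : ι → X →L[𝕜] X} {C : ℝ} (hP : ∀ i, ‖P i‖ ≤ C) :
    IsClosed {x | Tendsto (fun i => P i x) l (𝓝 x)} := by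
  have hP' : Equicontinuous fun i => (P i : X → X) :=
    (show (∃ C, ∀ i, ‖P i‖ ≤ C) ↔ _ from (NormedSpace.equicontinuous_TFAE P).out 5 1).mp ⟨C, hP⟩
  exact hP'.isClosed_setOfPred_tendsto continuous_id

section Cohen

variable {𝕜 B X : Type*} [RCLike 𝕜] [NormedRing B] [NormedAlgebra 𝕜 B]
  [NormedAddCommGroup X] [NormedSpace 𝕜 X] [CompleteSpace X]
  {π : B →L[𝕜] (X →L[𝕜] X)}

theorem CohenFactorization.exists_units_succ (hπ : ∀ u v, π (u * v) = π u * π v) (x : X) {t : ℝ} (ht : 0 ≤ t)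
    {a b : B} (ha : t * (1 + ‖π a‖) ≤ 2⁻¹) {n : ℕ} (U : (X →L[𝕜] X)ˣ)
    (hU : (U : X →L[𝕜] X) = (((1 - t) ^ n : ℝ) : 𝕜) • 1 + π b) :
    ∃ U' : (X →L[𝕜] X)ˣ,
      (U' : X →L[𝕜] X) = (((1 - t) ^ (n + 1) : ℝ) : 𝕜) • 1 +
        π (b + (t : 𝕜) • (a * b - b) + ((t * (1 - t) ^ n : ℝ) : 𝕜) • a) ∧
      ‖(↑U'⁻¹ : X →L[𝕜] X) x - (↑U⁻¹ : X →L[𝕜] X) x‖ ≤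
        2 * t * ‖(↑U⁻¹ : X →L[𝕜] X)‖ * ‖π a x - x‖ := by
  have hs : ‖(t : 𝕜) • (1 - π a)‖ ≤ 2⁻¹ := by
    rw [norm_smul, RCLike.norm_ofReal, abs_of_nonneg ht]
    refine le_trans ?_ ha
    gcongr
    exact (norm_sub_le _ _).trans (by gcongr; exact ContinuousLinearMap.norm_id_le)
  obtain ⟨h, hh, hh_inv⟩ := exists_units_val_eq_one_sub ContinuousLinearMap.norm_id_le hs
  refine ⟨h * U, ?_, ?_⟩
  · rw [Units.val_mul, hh, hU]
    simp only [map_add, map_smul, map_sub, hπ, sub_mul, mul_add, smul_mul_assoc, mul_smul_comm,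
      one_mul, mul_one, smul_sub]
    push_cast
    module
  · have hdiff : (↑(h * U)⁻¹ : X →L[𝕜] X) x - (↑U⁻¹ : X →L[𝕜] X) x =
        (↑U⁻¹ : X →L[𝕜] X) ((↑h⁻¹ : X →L[𝕜] X) ((t : 𝕜) • (x - π a x))) := by
      have hx : (t : 𝕜) • (x - π a x) = x - (h : X →L[𝕜] X) x := by
        rw [hh]; simp [smul_sub]
      rw [hx, map_sub, ← mul_apply_eq_comp, Units.inv_mul, mul_inv_rev, Units.val_mul]
      simp
    rw [hdiff, norm_sub_rev (π a x)]
    calc _ ≤ ‖(↑U⁻¹ : X →L[𝕜] X)‖ * (2 * ‖(t : 𝕜) • (x - π a x)‖) := by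
          refine (ContinuousLinearMap.le_opNorm _ _).trans ?_
          gcongr
          exact (ContinuousLinearMap.le_opNorm _ _).trans (by gcongr)
      _ = _ := by rw [norm_smul, RCLike.norm_ofReal, abs_of_nonneg ht]; ring

theorem CohenFactorization.exists_seq (hπ : ∀ u v, π (u * v) = π u * π v) (x : X) {t C : ℝ} (ht0 : 0 < t)
    (ht1 : t < 1)
    (hsel : ∀ b : B, ∀ ε > 0, ∀ δ > 0,
      ∃ a, ‖a‖ ≤ C ∧ t * (1 + ‖π a‖) ≤ 2⁻¹ ∧ ‖a * b - b‖ < ε ∧ ‖π a x - x‖ < δ) :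
    ∃ (b : ℕ → B) (U : ℕ → (X →L[𝕜] X)ˣ),
      (∀ n, (U n : X →L[𝕜] X) = (((1 - t) ^ n : ℝ) : 𝕜) • 1 + π (b n)) ∧
      (∀ n, ‖b (n + 1) - b n‖ ≤ t * (1 + C) * (1 - t) ^ n) ∧
      ∀ n, ‖(↑(U (n + 1))⁻¹ : X →L[𝕜] X) x - (↑(U n)⁻¹ : X →L[𝕜] X) x‖ ≤ (1 / 2) ^ n := by
  refine (exists_seq_of_forall_exists_succ (a₀ := ((0 : B), (1 : (X →L[𝕜] X)ˣ)))
    (fun n (p : B × (X →L[𝕜] X)ˣ) => (p.2 : X →L[𝕜] X) = (((1 - t) ^ n : ℝ) : 𝕜) • 1 + π p.1)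
    (fun n p q => ‖q.1 - p.1‖ ≤ t * (1 + C) * (1 - t) ^ n ∧
      ‖(↑q.2⁻¹ : X →L[𝕜] X) x - (↑p.2⁻¹ : X →L[𝕜] X) x‖ ≤ (1 / 2) ^ n)
    (by simp) ?_).elim fun f ⟨hfU, hf⟩ =>
      ⟨fun n => (f n).1, fun n => (f n).2, hfU, fun n => (hf n).1, fun n => (hf n).2⟩
  rintro n ⟨b, U⟩ hU
  dsimp only at hU ⊢
  have hpow : 0 < (1 - t) ^ n := pow_pos (by linarith) n
  set M := ‖(↑U⁻¹ : X →L[𝕜] X)‖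
  obtain ⟨a, haC, ha, hab, hax⟩ :=
    hsel b _ hpow ((1 / 2) ^ n / (2 * (M + 1))) (by positivity)
  have hM : 0 < M + 1 := by positivity
  have ht2 : 2 * t ≤ 1 := by nlinarith [norm_nonneg (π a)]
  obtain ⟨U', hU', hdiff⟩ := CohenFactorization.exists_units_succ hπ x ht0.le ha U hU
  refine ⟨(_, U'), hU', ?_, hdiff.trans ?_⟩
  · calc _ = ‖(t : 𝕜) • (a * b - b) + ((t * (1 - t) ^ n : ℝ) : 𝕜) • a‖ := by
          rw [add_assoc, add_sub_cancel_left]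
      _ ≤ t * (1 - t) ^ n + t * (1 - t) ^ n * C := by
          refine (norm_add_le _ _).trans ?_
          rw [norm_smul, norm_smul, RCLike.norm_ofReal, RCLike.norm_ofReal, abs_of_pos ht0,
            abs_of_pos (by positivity)]
          gcongr
      _ = _ := by ring
  · calc 2 * t * M * ‖π a x - x‖ ≤ 1 * (M + 1) * ((1 / 2) ^ n / (2 * (M + 1))) := by
          gcongr
          linarith
      _ = (1 / 2) ^ n / 2 := by field_simp
      _ ≤ (1 / 2) ^ n := by linarith [pow_pos (by norm_num : (0:ℝ) < 1 / 2) n]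

theorem cohen_factorization [CompleteSpace B] (hπ : ∀ u v, π (u * v) = π u * π v)
    {ι : Type*} {l : Filter ι} [l.NeBot] {e : ι → B} {C : ℝ} (hbd : ∀ i, ‖e i‖ ≤ C)
    (hai : ∀ b, Tendsto (fun i => e i * b) l (𝓝 b)) {x : X}
    (hx : Tendsto (fun i => π (e i) x) l (𝓝 x)) :
    ∃ b y, π b y = x := by
  obtain ⟨i₀⟩ := l.nonempty_of_neBot
  have hC : 0 ≤ C := (norm_nonneg _).trans (hbd i₀)
  set t := (2 * (1 + ‖π‖ * C))⁻¹ with ht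
  have hK : 1 ≤ 1 + ‖π‖ * C := le_add_of_nonneg_right (mul_nonneg (norm_nonneg π) hC)
  have ht0 : 0 < t := by positivity
  have ht1 : t < 1 := by rw [ht, inv_lt_one₀ (by positivity)]; linarith
  have hsel : ∀ b : B, ∀ ε > 0, ∀ δ > 0,
      ∃ a, ‖a‖ ≤ C ∧ t * (1 + ‖π a‖) ≤ 2⁻¹ ∧ ‖a * b - b‖ < ε ∧ ‖π a x - x‖ < δ := by
    intro b ε hε δ hδ
    have hb := (tendsto_iff_norm_sub_tendsto_zero.mp (hai b)).eventually (gt_mem_nhds hε)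
    have hx := (tendsto_iff_norm_sub_tendsto_zero.mp hx).eventually (gt_mem_nhds hδ)
    obtain ⟨i, hib, hix⟩ := (hb.and hx).exists
    refine ⟨e i, hbd i, ?_, hib, hix⟩
    calc t * (1 + ‖π (e i)‖) ≤ t * (1 + ‖π‖ * C) := by
          gcongr; exact (π.le_opNorm _).trans (by gcongr; exact hbd i)
      _ = 2⁻¹ := by rw [ht]; field_simp
  obtain ⟨b, U, hU, hb, hz⟩ := CohenFactorization.exists_seq (𝕜 := 𝕜) hπ x ht0 ht1 hsel
  set z := fun n => (↑(U n)⁻¹ : X →L[𝕜] X) x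
  obtain ⟨b₀, hb₀⟩ := cauchySeq_tendsto_of_complete <|
    cauchySeq_of_le_geometric (f := b) _ _ (by linarith) fun n => (dist_comm _ _).trans_le <|
      (dist_eq_norm _ _).trans_le (hb n)
  obtain ⟨y, hy⟩ := cauchySeq_tendsto_of_complete <|
    cauchySeq_of_le_geometric (f := z) (1 / 2) 1 (by norm_num) fun n => (dist_comm _ _).trans_le <|
      (dist_eq_norm _ _).trans_le ((hz n).trans_eq (one_mul _).symm)
  have hfac : ∀ n, (((1 - t) ^ n : ℝ) : 𝕜) • z n + π (b n) (z n) = x := fun n => by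
    have h := congr($((U n).mul_inv) x)
    rw [mul_apply_eq_comp, hU] at h
    simpa using h
  have hpow : Tendsto (fun n => (((1 - t) ^ n : ℝ) : 𝕜)) atTop (𝓝 0) := by
    have h := ((RCLike.continuous_ofReal (K := 𝕜)).tendsto 0).comp
      (tendsto_pow_atTop_nhds_zero_of_lt_one (r := 1 - t) (by linarith) (by linarith))
    rwa [RCLike.ofReal_zero] at h
  have hlim : Tendsto (fun n => (((1 - t) ^ n : ℝ) : 𝕜) • z n + π (b n) (z n)) atTop
      (𝓝 ((0 : 𝕜) • y + π b₀ y)) :=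
    (hpow.smul hy).add ((π.continuous₂.tendsto (b₀, y)).comp (hb₀.prodMk_nhds hy))
  simp only [hfac, zero_smul, zero_add, tendsto_const_nhds_iff] at hlim
  exact ⟨b₀, y, hlim.symm⟩

end Cohen

section DualModule

omit [CompleteSpace A]

variable (A) in
noncomputable def dualActL : A →L[ℂ] (A →L[ℂ] ℂ) →L[ℂ] (A →L[ℂ] ℂ) :=
  (ContinuousLinearMap.compL ℂ A A ℂ).flip.comp (ContinuousLinearMap.mul ℂ A)

theorem dualActL_apply (u : A) (T : A →L[ℂ] ℂ) : dualActL A u T = dualAct u T := rfl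

theorem dualActL_mul (u v : A) : dualActL A (u * v) = dualActL A u * dualActL A v := by
  ext T w
  change T (u * v * w) = T (v * (u * w))
  rw [mul_left_comm, mul_assoc]

theorem norm_dualActL_le (u : A) : ‖dualActL A u‖ ≤ ‖u‖ :=
  ContinuousLinearMap.opNorm_le_bound _ (norm_nonneg u) fun T => by
    rw [mul_comm]
    exact (T.opNorm_comp_le _).trans (by gcongr; exact ContinuousLinearMap.opNorm_mul_apply_le ℂ A u)

theorem tendsto_dualActL_dualAct {ι : Type*} {l : Filter ι} {e : ι → A}
    (hai : ∀ v, Tendsto (fun i => e i * v) l (𝓝 v)) (u : A) (T : A →L[ℂ] ℂ) :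
    Tendsto (fun i => dualActL A (e i) (dualAct u T)) l (𝓝 (dualAct u T)) := by
  simp only [← dualActL_apply, ← mul_apply_eq_comp, ← dualActL_mul]
  exact ((dualActL A).flip T).continuous.tendsto u |>.comp (hai u)

end DualModule

/-- Cohen factorization for the dual module: if `A` has a bounded approximate
identity, then the module product `A·A'` is norm closed in `A'`. -/
theorem dual_module_product_closed
    {ι : Type*} (l : Filter ι) [l.NeBot] (e : ι → A) (C : ℝ)
    (hbd : ∀ i, ‖e i‖ ≤ C)
    (hai : ∀ v : A, Tendsto (fun i => ‖e i * v - v‖) l (𝓝 (0 : ℝ))) :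
    closure {S : A →L[ℂ] ℂ | ∃ (u : A) (T : A →L[ℂ] ℂ), S = dualAct u T} =
      {S : A →L[ℂ] ℂ | ∃ (u : A) (T : A →L[ℂ] ℂ), S = dualAct u T} := by
  have hai' (v : A) : Tendsto (fun i => e i * v) l (𝓝 v) :=
    tendsto_iff_norm_sub_tendsto_zero.mpr (hai v)
  refine subset_antisymm (fun S hS => ?_) subset_closure
  have hS : Tendsto (fun i => dualActL A (e i) S) l (𝓝 S) := by
    refine closure_minimal ?_ (ContinuousLinearMap.isClosed_setOf_tendsto_apply_self
      fun i => (norm_dualActL_le (e i)).trans (hbd i)) hS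
    rintro _ ⟨u, T, rfl⟩
    exact tendsto_dualActL_dualAct hai' u T
  obtain ⟨u, T, h⟩ := cohen_factorization dualActL_mul hbd hai' hS
  exact ⟨u, T, h.symm⟩
end
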